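/- arXiv:1606.02359 — 3 statements merged into one kernel-verified Lean document; each statement's English description precedes it below -/
import Mathlib

section
/- Let G be a DAG and v, w two non-adjacent vertices. Then v and w are d-separated given the parent set pa(v) of v, or d-separated given the parent set pa(w) of w. -/
/-!
If `w` is not a descendant of `v`, then `pa(v)` d-separates them; otherwise `v` is not a
descendant of `w` by acyclicity, and `pa(w)` does. For the first claim take a d-connecting
path from `v`. If it starts with an edge `b → v`, then `b ∈ pa(v)` is a non-collider, since
`v → b` would close a 2-cycle. If it starts with `v → b`, it must stay directed: its first
collider would be a descendant of `v` and an ancestor of a parent of `v`, closing a cycle.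
So the whole path is directed and `w` is a descendant of `v`.
-/

/-- `b` is a collider between consecutive path neighbors `a` and `c`:
both edges point into `b`. -/
def IsCollider {V : Type*} (E : V → V → Prop) (a b c : V) : Prop := E a b ∧ E c b

/-- `b` is an ancestor of some node of `C` (via a directed path, possibly trivial). -/
def AncestorOf {V : Type*} (E : V → V → Prop) (b : V) (C : Set V) : Prop :=
  ∃ c ∈ C, Relation.ReflTransGen E b c

/-- `v` and `w` are d-connected given `C` in the directed graph `E`: there is a
path (a list of distinct vertices, consecutive ones joined by an edge in either
direction) from `v` to `w` on which every collider is an ancestor of `C` and no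
non-collider lies in `C`. -/
def DConnected {V : Type*} (E : V → V → Prop) (C : Set V) (v w : V) : Prop :=
  ∃ l : List V, l.Nodup ∧ List.Chain' (fun a b => E a b ∨ E b a) l ∧
    l.head? = some v ∧ l.getLast? = some w ∧
    ∀ a b c : V, [a, b, c] <:+: l →
      (IsCollider E a b c → AncestorOf E b C) ∧ (¬ IsCollider E a b c → b ∉ C)

/-- `v` and `w` are d-separated given `C`. -/
def DSeparated {V : Type*} (E : V → V → Prop) (C : Set V) (v w : V) : Prop :=
  ¬ DConnected E C v w

section
variable {V : Type*} {E : V → V → Prop}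

theorem IsCollider.symm {a b c : V} (h : IsCollider E a b c) : IsCollider E c b a :=
  ⟨h.2, h.1⟩

theorem isCollider_comm {a b c : V} : IsCollider E a b c ↔ IsCollider E c b a :=
  ⟨IsCollider.symm, IsCollider.symm⟩

theorem DConnected.symm {C : Set V} {v w : V} (h : DConnected E C v w) :
    DConnected E C w v := by
  obtain ⟨l, hnd, hch, hhd, hlast, htrip⟩ := h
  refine ⟨l.reverse, List.nodup_reverse.mpr hnd, ?_, by simpa using hlast,
    by simpa using hhd, fun a b c hinf => ?_⟩
  · rw [List.Chain', List.isChain_reverse]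
    exact hch.imp fun _ _ h => h.symm
  · have hinf' : [c, b, a] <:+: l := by simpa using hinf.reverse
    rw [isCollider_comm]
    exact htrip c b a hinf'

theorem dSeparated_comm {C : Set V} {v w : V} : DSeparated E C v w ↔ DSeparated E C w v :=
  not_congr ⟨DConnected.symm, DConnected.symm⟩

/-- A path leaving `a` along an out-edge, all of whose colliders are ancestors of `C`, is
either directed up to its end or reaches a descendant of `a` in `C`. -/
theorem transGen_getLast_or_exists_mem_transGen {C : Set V} :
    ∀ (t : List V) (a b x : V), List.IsChain (fun a b => E a b ∨ E b a) (a :: b :: t) →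
      (∀ p q r, [p, q, r] <:+: a :: b :: t → IsCollider E p q r → AncestorOf E q C) →
      E a b → (b :: t).getLast? = some x →
      Relation.TransGen E a x ∨ ∃ c ∈ C, Relation.TransGen E a c
  | [], a, b, x, _, _, hab, hlast => by
    obtain rfl : b = x := by simpa using hlast
    exact .inl (.single hab)
  | c :: t, a, b, x, hch, hcol, hab, hlast => by
    rcases hch.tail.rel with hbc | hcb
    · have hcol' : ∀ p q r, [p, q, r] <:+: b :: c :: t → IsCollider E p q r →
          AncestorOf E q C :=
        fun p q r h => hcol p q r (h.trans (List.suffix_cons a _).isInfix)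
      rcases transGen_getLast_or_exists_mem_transGen t b c x hch.tail hcol' hbc
          (by simpa using hlast) with hbx | ⟨u, hu, hbu⟩
      · exact .inl (.head hab hbx)
      · exact .inr ⟨u, hu, .head hab hbu⟩
    · obtain ⟨u, hu, hbu⟩ := hcol a b c ⟨[], t, rfl⟩ ⟨hab, hcb⟩
      exact .inr ⟨u, hu, Relation.TransGen.head' hab hbu⟩

theorem dSeparated_parents_of_not_transGen (hacyc : ∀ x : V, ¬ Relation.TransGen E x x)
    {v w : V} (hvw : v ≠ w) (hwv : ¬ E w v) (hdesc : ¬ Relation.TransGen E v w) :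
    DSeparated E {u | E u v} v w := by
  rintro ⟨_ | ⟨v', t⟩, -, hch, hhd, hlast, htrip⟩
  · simp at hhd
  obtain rfl : v = v' := by simpa using hhd.symm
  obtain _ | ⟨b, t⟩ := t
  · exact hvw (by simpa using hlast)
  rcases hch.rel with hvb | hbv
  · rcases transGen_getLast_or_exists_mem_transGen t v b w hch
        (fun p q r h => (htrip p q r h).1) hvb (by simpa using hlast) with hvw' | ⟨u, huv, hvu⟩
    · exact hdesc hvw'
    · exact hacyc v (hvu.tail huv)
  · obtain _ | ⟨c, t⟩ := t
    · obtain rfl : b = w := by simpa using hlast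
      exact hwv hbv
    have hnc : ¬ IsCollider E v b c := fun hcol => hacyc v (.head hcol.1 (.single hbv))
    exact (htrip v b c ⟨[], t, rfl⟩).2 hnc hbv

end

theorem dsep_given_parents_general {V : Type*} (E : V → V → Prop)
    (hacyc : ∀ x : V, ¬ Relation.TransGen E x x)
    (v w : V) (hvw : v ≠ w) (hnadj : ¬ E v w ∧ ¬ E w v) :
    DSeparated E {u | E u v} v w ∨ DSeparated E {u | E u w} v w := by
  by_cases hdesc : Relation.TransGen E v w
  · have hnot : ¬ Relation.TransGen E w v := fun hwv => hacyc v (hdesc.trans hwv)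
    exact .inr (dSeparated_comm.mp
      (dSeparated_parents_of_not_transGen hacyc hvw.symm hnadj.1 hnot))
  · exact .inl (dSeparated_parents_of_not_transGen hacyc hvw hnadj.2 hdesc)

/-- In a DAG, two non-adjacent vertices `v` and `w` are d-separated given the
parents of `v`, or d-separated given the parents of `w`. -/
theorem dsep_given_parents {V : Type*} [Fintype V] (E : V → V → Prop)
    (hacyc : ∀ x : V, ¬ Relation.TransGen E x x)
    (v w : V) (hvw : v ≠ w) (hnadj : ¬ E v w ∧ ¬ E w v) :
    DSeparated E {u | E u v} v w ∨ DSeparated E {u | E u w} v w :=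
  dsep_given_parents_general E hacyc v w hvw hnadj
end

section
/- If a density f on a product space factorizes according to a DAG G as a product of conditional densities f(x_v | x_{pa(v)}), then f factorizes with respect to the moral graph G^m of G, i.e., f is a product of potential functions indexed by the cliques of G^m. -/
/-- `g` depends only on the coordinates in `S`. -/
def DependsOnlyOn {V : Type*} {X : V → Type*} (S : Set V) (g : (∀ v, X v) → ℝ) : Prop :=
  ∀ x y : ∀ v, X v, (∀ u ∈ S, x u = y u) → g x = g y

/-- The parent set of `v` in the directed graph `E`. -/
def parents {V : Type*} (E : V → V → Prop) (v : V) : Set V := {u | E u v}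

/-- Adjacency in the moral graph of the DAG `E`: distinct vertices joined by an
edge (in either direction) or sharing a common child. -/
def MoralAdj {V : Type*} (E : V → V → Prop) (a b : V) : Prop :=
  a ≠ b ∧ (E a b ∨ E b a ∨ ∃ u, E a u ∧ E b u)

/-- If a density `f` factorizes according to a DAG `E` as a product of
conditional densities (each factor `g v` depending only on `{v} ∪ pa(v)`),
then `f` factorizes with respect to the moral graph: it is a product of
potential functions indexed by cliques of the moral graph. -/
theorem dag_factorization_implies_moral_factorization
    {V : Type*} [Fintype V] {X : V → Type*}
    (E : V → V → Prop) (hacyc : ∀ x : V, ¬ Relation.TransGen E x x)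
    (f : (∀ v, X v) → ℝ) (g : V → (∀ v, X v) → ℝ)
    (hdep : ∀ v, DependsOnlyOn (insert v (parents E v)) (g v))
    (hfac : ∀ x, f x = ∏ v, g v x) :
    ∃ (𝒞 : Finset (Set V)) (φ : Set V → (∀ v, X v) → ℝ),
      (∀ C ∈ 𝒞, ∀ a ∈ C, ∀ b ∈ C, a ≠ b → MoralAdj E a b) ∧
      (∀ C ∈ 𝒞, DependsOnlyOn C (φ C)) ∧
      (∀ x, f x = ∏ C ∈ 𝒞, φ C x) := by
  classical
  set S : V → Set V := fun v => insert v (parents E v) with hS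
  refine ⟨Finset.univ.image S,
    fun C x => ∏ v ∈ Finset.univ.filter (fun v => S v = C), g v x, ?_, ?_, ?_⟩
  · rintro C hC a ha b hb hab
    simp only [Finset.mem_image, Finset.mem_univ, true_and] at hC
    obtain ⟨v, rfl⟩ := hC
    refine ⟨hab, ?_⟩
    rcases ha with rfl | ha
    · rcases hb with rfl | hb
      · exact absurd rfl hab
      · exact Or.inr (Or.inl hb)
    · rcases hb with rfl | hb
      · exact Or.inl ha
      · exact Or.inr (Or.inr ⟨v, ha, hb⟩)
  · intro C hC x y hxy
    refine Finset.prod_congr rfl ?_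
    intro v hv
    simp only [Finset.mem_filter] at hv
    exact hdep v x y (fun u hu => hxy u (hv.2 ▸ hu))
  · intro x
    rw [hfac x]
    exact (Finset.prod_fiberwise_of_maps_to (fun v _ => Finset.mem_image_of_mem S
      (Finset.mem_univ v)) (fun v => g v x)).symm
end

section
/- If the distribution of X factorizes with respect to a tree G = (V,E) and has positive marginal densities, then its density satisfies f(x) = ∏_{{v,w} ∈ E} [f_{vw}(x_v,x_w)/(f_v(x_v) f_w(x_w))] · ∏_{v ∈ V} f_v(x_v), where f_v and f_{vw} are the one- and two-dimensional marginal densities. -/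
/-- One-dimensional marginal of `f` at coordinate `v`. -/
def marg1 {V : Type*} [Fintype V] [DecidableEq V] {X : V → Type*} [∀ v, Fintype (X v)]
    [∀ v, DecidableEq (X v)] (f : (∀ v, X v) → ℝ) (v : V) (a : X v) : ℝ :=
  ∑ y : ∀ v, X v, if y v = a then f y else 0

/-- Two-dimensional marginal of `f` at coordinates `v, w`. -/
def marg2 {V : Type*} [Fintype V] [DecidableEq V] {X : V → Type*} [∀ v, Fintype (X v)]
    [∀ v, DecidableEq (X v)] (f : (∀ v, X v) → ℝ) (v w : V) (a : X v) (b : X w) : ℝ :=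
  ∑ y : ∀ v, X v, if y v = a ∧ y w = b then f y else 0

open Finset Function

section DependsOnlyOn

variable {V : Type*} {X : V → Type*} {S T : Set V} {g h : (∀ v, X v) → ℝ}

theorem DependsOnlyOn.mono (hg : DependsOnlyOn S g) (hST : S ⊆ T) : DependsOnlyOn T g :=
  fun x y hxy => hg x y fun u hu => hxy u (hST hu)

theorem DependsOnlyOn.mul (hg : DependsOnlyOn S g) (hh : DependsOnlyOn S h) :
    DependsOnlyOn S (g * h) :=
  fun x y hxy => by simp only [Pi.mul_apply, hg x y hxy, hh x y hxy]

theorem DependsOnlyOn.update_eq [DecidableEq V] (hg : DependsOnlyOn S g) {ℓ : V} (hℓ : ℓ ∉ S)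
    (x : ∀ v, X v) (a : X ℓ) : g (update x ℓ a) = g x :=
  hg _ _ fun _ hu => update_of_ne (ne_of_mem_of_not_mem hu hℓ) a x

theorem DependsOnlyOn.sum_update [DecidableEq V] (hg : DependsOnlyOn S g) (ℓ : V)
    [Fintype (X ℓ)] : DependsOnlyOn (S \ {ℓ}) fun x => ∑ a, g (update x ℓ a) := by
  intro x y hxy
  refine sum_congr rfl fun a _ => hg _ _ fun u hu => ?_
  by_cases huℓ : u = ℓ
  · subst huℓ
    simp
  · simp only [update_of_ne huℓ]
    exact hxy u ⟨hu, huℓ⟩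

end DependsOnlyOn

section AvgAt

variable {V : Type*} [DecidableEq V] {X : V → Type*} [∀ v, Fintype (X v)]

/-- The law of `X` with the coordinate `ℓ` replaced by an independent uniform variable:
the marginal of `f` on `V \ {ℓ}`, times the uniform density on `X ℓ`. -/
noncomputable def avgAt (ℓ : V) (f : (∀ v, X v) → ℝ) (x : ∀ v, X v) : ℝ :=
  (∑ a, f (update x ℓ a)) / Fintype.card (X ℓ)

variable {ℓ : V} {f : (∀ v, X v) → ℝ}

theorem avgAt_update (x : ∀ v, X v) (a : X ℓ) : avgAt ℓ f (update x ℓ a) = avgAt ℓ f x := by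
  simp [avgAt]

theorem avgAt_pos [Nonempty (X ℓ)] (hpos : ∀ x, 0 < f x) (x : ∀ v, X v) : 0 < avgAt ℓ f x :=
  div_pos (sum_pos (fun _ _ => hpos _) univ_nonempty) (Nat.cast_pos.2 Fintype.card_pos)

end AvgAt

section Marginals

variable {V : Type*} [Fintype V] [DecidableEq V] {X : V → Type*} [∀ v, Fintype (X v)]
  [∀ v, DecidableEq (X v)]

theorem card_mul_sum_ite_eq (ℓ : V) (a : X ℓ) (F : (∀ v, X v) → ℝ) :
    (Fintype.card (X ℓ) : ℝ) * ∑ x, (if x ℓ = a then F x else 0) = ∑ x, F (update x ℓ a) := by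
  have hsplit : ∀ (c : X ℓ) (y : ∀ j : {j // j ≠ ℓ}, X j),
      update ((Equiv.piSplitAt ℓ X).symm (c, y)) ℓ a = (Equiv.piSplitAt ℓ X).symm (a, y) := by
    intro c y
    ext j
    by_cases h : j = ℓ
    · subst h
      simp
    · simp [h, Equiv.piSplitAt_symm_apply]
  simp only [← (Equiv.piSplitAt ℓ X).symm.sum_comp, Fintype.sum_prod_type, hsplit]
  simp [Finset.card_univ]

theorem sum_sum_update (ℓ : V) (F : (∀ v, X v) → ℝ) :
    ∑ x, ∑ a, F (update x ℓ a) = Fintype.card (X ℓ) * ∑ x, F x := by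
  rw [sum_comm]
  simp_rw [← card_mul_sum_ite_eq, ← mul_sum]
  rw [sum_comm]
  simp

theorem marg1_pos {f : (∀ v, X v) → ℝ} (hpos : ∀ x, 0 < f x) (x : ∀ v, X v) (v : V) (a : X v) :
    0 < marg1 f v a :=
  sum_pos' (fun z _ => by split_ifs <;> simp [(hpos z).le])
    ⟨update x v a, mem_univ _, by simp [hpos]⟩

theorem marg2_comm (f : (∀ v, X v) → ℝ) (v w : V) (a : X v) (b : X w) :
    marg2 f v w a b = marg2 f w v b a :=
  sum_congr rfl fun _ _ => if_congr and_comm rfl rfl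

theorem sum_marg2 (f : (∀ v, X v) → ℝ) (v w : V) (b : X w) :
    ∑ a, marg2 f v w a b = marg1 f w b := by
  simp only [marg2, marg1]
  rw [sum_comm]
  refine sum_congr rfl fun z _ => ?_
  simp [ite_and]

noncomputable def dependenceRatio (f : (∀ v, X v) → ℝ) (v w : V) (a : X v) (b : X w) : ℝ :=
  marg2 f v w a b / (marg1 f v a * marg1 f w b)

theorem dependenceRatio_comm (f : (∀ v, X v) → ℝ) (v w : V) (a : X v) (b : X w) :
    dependenceRatio f v w a b = dependenceRatio f w v b a := by
  rw [dependenceRatio, dependenceRatio, marg2_comm, mul_comm]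

variable {ℓ : V} {f : (∀ v, X v) → ℝ}

theorem sum_mul_avgAt [Nonempty (X ℓ)] {g : (∀ v, X v) → ℝ}
    (hg : ∀ x a, g (update x ℓ a) = g x) : ∑ x, g x * avgAt ℓ f x = ∑ x, g x * f x := by
  have hN : (Fintype.card (X ℓ) : ℝ) ≠ 0 := Nat.cast_ne_zero.2 Fintype.card_ne_zero
  calc ∑ x, g x * avgAt ℓ f x
      = (∑ x, ∑ a, g (update x ℓ a) * f (update x ℓ a)) / Fintype.card (X ℓ) := by
        simp only [avgAt, hg, mul_div_assoc', mul_sum, sum_div]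
    _ = ∑ x, g x * f x := by
        rw [sum_sum_update ℓ fun x => g x * f x, mul_div_cancel_left₀ _ hN]

theorem sum_avgAt [Nonempty (X ℓ)] : ∑ x, avgAt ℓ f x = ∑ x, f x := by
  simpa using sum_mul_avgAt (ℓ := ℓ) (f := f) (g := 1) fun _ _ => rfl

theorem marg1_avgAt_of_ne [Nonempty (X ℓ)] {v : V} (hv : v ≠ ℓ) (a : X v) :
    marg1 (avgAt ℓ f) v a = marg1 f v a := by
  simpa [marg1] using
    sum_mul_avgAt (f := f) (g := fun x => if x v = a then 1 else 0) fun x b => by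
      rw [update_of_ne hv]

theorem marg2_avgAt_of_ne [Nonempty (X ℓ)] {v w : V} (hv : v ≠ ℓ) (hw : w ≠ ℓ) (a : X v)
    (b : X w) : marg2 (avgAt ℓ f) v w a b = marg2 f v w a b := by
  simpa [marg2] using
    sum_mul_avgAt (f := f) (g := fun x => if x v = a ∧ x w = b then 1 else 0) fun x c => by
      rw [update_of_ne hv, update_of_ne hw]

theorem marg1_avgAt_self [Nonempty (X ℓ)] (a : X ℓ) :
    marg1 (avgAt ℓ f) ℓ a = (∑ x, f x) / Fintype.card (X ℓ) := by
  have hN : (Fintype.card (X ℓ) : ℝ) ≠ 0 := Nat.cast_ne_zero.2 Fintype.card_ne_zero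
  rw [eq_div_iff hN, mul_comm, marg1, card_mul_sum_ite_eq]
  simp only [avgAt_update]
  exact sum_avgAt

theorem dependenceRatio_avgAt_of_ne [Nonempty (X ℓ)] {v w : V} (hv : v ≠ ℓ) (hw : w ≠ ℓ)
    (a : X v) (b : X w) : dependenceRatio (avgAt ℓ f) v w a b = dependenceRatio f v w a b := by
  rw [dependenceRatio, marg2_avgAt_of_ne hv hw, marg1_avgAt_of_ne hv, marg1_avgAt_of_ne hw,
    dependenceRatio]

theorem prod_marg1_avgAt [Nonempty (X ℓ)] (hnorm : ∑ x, f x = 1) (x : ∀ v, X v) :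
    ∏ v, marg1 (avgAt ℓ f) v (x v) =
      (Fintype.card (X ℓ) : ℝ)⁻¹ * ∏ v ∈ univ.erase ℓ, marg1 f v (x v) := by
  rw [← mul_prod_erase univ _ (mem_univ ℓ), marg1_avgAt_self, hnorm, one_div]
  exact congrArg _ (prod_congr rfl fun v hv => marg1_avgAt_of_ne (ne_of_mem_erase hv) _)

end Marginals

section Markov

variable {V : Type*} [Fintype V] [DecidableEq V] {X : V → Type*} [∀ v, Fintype (X v)]
  [∀ v, DecidableEq (X v)] {ℓ w : V} {f φ ψ : (∀ v, X v) → ℝ}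

theorem marg2_eq_mul_of_dependsOnlyOn (hℓw : ℓ ≠ w) (hφ : DependsOnlyOn {ℓ, w} φ)
    (hψ : ∀ x a, ψ (update x ℓ a) = ψ x) (hf : ∀ x, f x = φ x * ψ x) (x : ∀ v, X v) (c : X ℓ) :
    marg2 f ℓ w c (x w) =
      φ (update x ℓ c) * ((∑ z, if z w = x w then ψ z else 0) / Fintype.card (X ℓ)) := by
  have : Nonempty (X ℓ) := ⟨c⟩
  have hN : (Fintype.card (X ℓ) : ℝ) ≠ 0 := Nat.cast_ne_zero.2 Fintype.card_ne_zero
  have hfiber : ∑ z, (if z ℓ = c then (if z w = x w then ψ z else 0) else 0) =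
      (∑ z, if z w = x w then ψ z else 0) / Fintype.card (X ℓ) := by
    rw [eq_div_iff hN, mul_comm, card_mul_sum_ite_eq]
    simp only [update_of_ne hℓw.symm, hψ]
  rw [← hfiber, mul_sum, marg2]
  refine sum_congr rfl fun z _ => ?_
  by_cases hzℓ : z ℓ = c <;> by_cases hzw : z w = x w <;> simp only [hzℓ, hzw, and_self,
    and_false, false_and, if_true, if_false, mul_zero]
  rw [hf z, hφ z (update x ℓ c) ?_]
  rintro u (rfl | rfl)
  · simp [hzℓ]
  · simp [update_of_ne hℓw.symm, hzw]

/-- Conditional independence of `X ℓ` and `X (V \ {ℓ, w})` given `X w`, in division-free form. -/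
theorem mul_marg1_eq_marg2_mul_sum_update (hℓw : ℓ ≠ w) (hφ : DependsOnlyOn {ℓ, w} φ)
    (hψ : ∀ x a, ψ (update x ℓ a) = ψ x) (hf : ∀ x, f x = φ x * ψ x) (x : ∀ v, X v) :
    f x * marg1 f w (x w) = marg2 f ℓ w (x ℓ) (x w) * ∑ a, f (update x ℓ a) := by
  rw [← sum_marg2 f ℓ w]
  simp only [marg2_eq_mul_of_dependsOnlyOn hℓw hφ hψ hf, hf, hψ, update_eq_self, ← sum_mul]
  ring

end Markov

section Independent

variable {V : Type*} [Fintype V] [DecidableEq V] {X : V → Type*} [∀ v, Fintype (X v)]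
  [∀ v, DecidableEq (X v)] {f : (∀ v, X v) → ℝ}

theorem marg1_eq_of_eq_prod {c : ∀ v, X v → ℝ} (hf : ∀ x, f x = ∏ v, c v (x v)) (v : V)
    (a : X v) : marg1 f v a = c v a * ∏ u ∈ univ.erase v, ∑ b, c u b := by
  set c' : ∀ u, X u → ℝ := update c v fun b => if b = a then c v b else 0
  have hc' : ∀ u ∈ univ.erase v, c' u = c u := fun u hu => update_of_ne (ne_of_mem_erase hu) _ _
  have hfiber : ∀ x, (if x v = a then f x else 0) = ∏ u, c' u (x u) := by
    intro x
    have hrest : ∏ u ∈ univ.erase v, c' u (x u) = ∏ u ∈ univ.erase v, c u (x u) :=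
      prod_congr rfl fun u hu => by rw [hc' u hu]
    rw [hf, ← mul_prod_erase univ (fun u => c u (x u)) (mem_univ v),
      ← mul_prod_erase univ (fun u => c' u (x u)) (mem_univ v), hrest]
    by_cases hx : x v = a <;> simp [c', hx]
  have hrest : ∏ u ∈ univ.erase v, ∑ b, c' u b = ∏ u ∈ univ.erase v, ∑ b, c u b :=
    prod_congr rfl fun u hu => by rw [hc' u hu]
  rw [marg1, sum_congr rfl fun x _ => hfiber x, ← Fintype.prod_sum,
    ← mul_prod_erase univ (fun u => ∑ b, c' u b) (mem_univ v), hrest]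
  simp [c']

theorem eq_prod_marg1_of_eq_prod {c : ∀ v, X v → ℝ} (hf : ∀ x, f x = ∏ v, c v (x v))
    (hnorm : ∑ x, f x = 1) (x : ∀ v, X v) : f x = ∏ v, marg1 f v (x v) := by
  have hmass : ∏ u, ∑ b, c u b = 1 := by
    rw [← hnorm, Fintype.prod_sum]
    exact sum_congr rfl fun y _ => (hf y).symm
  have herase : ∀ v, ∏ u ∈ univ.erase v, ∑ b, c u b = (∑ b, c v b)⁻¹ := fun v =>
    eq_inv_of_mul_eq_one_right <| by
      rw [mul_prod_erase univ (fun u => ∑ b, c u b) (mem_univ v), hmass]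
  calc f x = (∏ v, c v (x v)) * (∏ v, ∑ b, c v b)⁻¹ := by rw [hmass, inv_one, mul_one, hf]
    _ = ∏ v, marg1 f v (x v) := by
        rw [← prod_inv_distrib, ← prod_mul_distrib]
        exact prod_congr rfl fun v _ => by rw [marg1_eq_of_eq_prod hf, herase]

end Independent

section FactorsOver

variable {V : Type*} [Fintype V] {X : V → Type*}

/-- Vertex factors are allowed so that the class is stable under `avgAt` at a pendant edge. -/
def FactorsOver (E : Finset (V × V)) (f : (∀ v, X v) → ℝ) : Prop :=
  ∃ (φ : V → V → (∀ v, X v) → ℝ) (χ : V → (∀ v, X v) → ℝ),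
    (∀ p ∈ E, DependsOnlyOn {p.1, p.2} (φ p.1 p.2)) ∧ (∀ v, DependsOnlyOn {v} (χ v)) ∧
      ∀ x, f x = (∏ p ∈ E, φ p.1 p.2 x) * ∏ v, χ v x

variable [DecidableEq V] {E : Finset (V × V)} {f : (∀ v, X v) → ℝ}

theorem FactorsOver.mul_left (hf : FactorsOver E f) {w : V} {k : (∀ v, X v) → ℝ}
    (hk : DependsOnlyOn {w} k) : FactorsOver E fun x => k x * f x := by
  obtain ⟨φ, χ, hφ, hχ, hfx⟩ := hf
  refine ⟨φ, fun v => (if v = w then k else 1) * χ v, hφ, fun v => ?_, fun x => ?_⟩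
  · by_cases hv : v = w
    · subst hv
      simpa using hk.mul (hχ v)
    · simpa [hv] using hχ v
  · simp only [hfx, Pi.mul_apply, prod_mul_distrib, ite_apply, Pi.one_apply, prod_ite_eq',
      mem_univ, if_true]
    ring

theorem FactorsOver.exists_leaf_split (hf : FactorsOver E f) {p : V × V} (hp : p ∈ E) {ℓ w : V}
    (hpℓw : p = (ℓ, w) ∨ p = (w, ℓ)) (hleaf : ∀ q ∈ E.erase p, ℓ ≠ q.1 ∧ ℓ ≠ q.2) :
    ∃ φ ψ : (∀ v, X v) → ℝ, DependsOnlyOn {ℓ, w} φ ∧ FactorsOver (E.erase p) ψ ∧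
      (∀ x a, ψ (update x ℓ a) = ψ x) ∧ ∀ x, f x = φ x * ψ x := by
  obtain ⟨φ, χ, hφ, hχ, hfx⟩ := hf
  have hpair : ({p.1, p.2} : Set V) = {ℓ, w} := by
    rcases hpℓw with rfl | rfl
    · rfl
    · exact Set.pair_comm _ _
  set χ' : V → (∀ v, X v) → ℝ := fun v => if v = ℓ then 1 else χ v
  have hχ' : ∀ v, DependsOnlyOn {v} (χ' v) := fun v => by
    by_cases hv : v = ℓ
    · simp only [χ', hv, if_true]
      exact fun _ _ _ => rfl
    · simpa [χ', hv] using hχ v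
  refine ⟨φ p.1 p.2 * χ ℓ, fun x => (∏ q ∈ E.erase p, φ q.1 q.2 x) * ∏ v, χ' v x, ?_,
    ⟨φ, χ', fun q hq => hφ q (mem_of_mem_erase hq), hχ', fun x => rfl⟩, fun x a => ?_,
    fun x => ?_⟩
  · rw [← hpair]
    exact (hφ p hp).mul ((hχ ℓ).mono (by rw [hpair]; simp))
  · dsimp only
    congr 1
    · refine prod_congr rfl fun q hq => (hφ q (mem_of_mem_erase hq)).update_eq ?_ x a
      simp [(hleaf q hq).1, (hleaf q hq).2]
    · refine prod_congr rfl fun v _ => ?_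
      by_cases hv : v = ℓ
      · simp [χ', hv]
      · simpa [χ', hv] using (hχ v).update_eq (Ne.symm hv) x a
  · have hrest : ∏ v ∈ univ.erase ℓ, χ' v x = ∏ v ∈ univ.erase ℓ, χ v x :=
      prod_congr rfl fun v hv => by simp [χ', ne_of_mem_erase hv]
    show f x = φ p.1 p.2 x * χ ℓ x * ((∏ q ∈ E.erase p, φ q.1 q.2 x) * ∏ v, χ' v x)
    rw [hfx, ← mul_prod_erase E _ hp, ← mul_prod_erase univ (fun v => χ v x) (mem_univ ℓ),
      ← mul_prod_erase univ (fun v => χ' v x) (mem_univ ℓ), hrest]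
    simp only [χ', if_pos, Pi.one_apply]
    ring

theorem FactorsOver.avgAt_of_leaf [∀ v, Fintype (X v)] (hf : FactorsOver E f) {p : V × V}
    (hp : p ∈ E) {ℓ w : V} (hpℓw : p = (ℓ, w) ∨ p = (w, ℓ)) (hleaf : ∀ q ∈ E.erase p, ℓ ≠ q.1 ∧ ℓ ≠ q.2) :
    FactorsOver (E.erase p) (avgAt ℓ f) := by
  obtain ⟨φ, ψ, hφ, hψ, hψℓ, hfx⟩ := hf.exists_leaf_split hp hpℓw hleaf
  have havg : avgAt ℓ f = fun x => (∑ a, φ (update x ℓ a)) / Fintype.card (X ℓ) * ψ x := by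
    funext x
    simp only [avgAt, hfx, hψℓ, ← sum_mul, div_mul_eq_mul_div]
  have hsum : DependsOnlyOn {w} fun x => ∑ a, φ (update x ℓ a) := by
    refine (hφ.sum_update ℓ).mono ?_
    rintro u ⟨rfl | rfl, hu⟩
    · exact absurd rfl hu
    · rfl
  rw [havg]
  exact hψ.mul_left fun x y hxy => congrArg (· / (Fintype.card (X ℓ) : ℝ)) (hsum x y hxy)

end FactorsOver

namespace SimpleGraph

variable {V : Type*} {G : SimpleGraph V}

theorem IsTree.eq_of_adj_of_dist_lt (hG : G.IsTree) (r : V) {v u u' : V} (hu : G.Adj v u)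
    (hu' : G.Adj v u') (h : G.dist r u < G.dist r v) (h' : G.dist r u' < G.dist r v) :
    u = u' := by
  classical
  obtain ⟨q, hq, -⟩ := (hG.connected r v).exists_path_of_dist
  have hparent : ∀ w, G.Adj v w → G.dist r w < G.dist r v → w = q.penultimate := by
    intro w hw hlt
    obtain ⟨s, hs, hslen⟩ := (hG.connected r w).exists_path_of_dist
    refine hG.isAcyclic.eq_penultimate_of_adj_end hq hw
      (hG.isAcyclic.mem_support_of_ne_mem_support_of_adj_of_isPath hq hs hw fun hv => ?_)
    have := (G.dist_le (s.takeUntil v hv)).trans (s.length_takeUntil_le_length hv)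
    omega
  rw [hparent u hu h, hparent u' hu' h']

/-- Take for `ℓ` an endpoint of `E` farthest from a root: its parent is its only neighbour
along `E`. -/
theorem IsTree.exists_pendant_edge [LinearOrder V] (hG : G.IsTree) {E : Finset (V × V)}
    (hE : ∀ p ∈ E, G.Adj p.1 p.2 ∧ p.1 < p.2) (hne : E.Nonempty) :
    ∃ p ∈ E, ∃ ℓ w : V, (p = (ℓ, w) ∨ p = (w, ℓ)) ∧ ∀ q ∈ E.erase p, ℓ ≠ q.1 ∧ ℓ ≠ q.2 := by
  obtain ⟨r⟩ := hG.connected.nonempty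
  set S := E.biUnion fun p => {p.1, p.2}
  obtain ⟨ℓ, hℓS, hmax⟩ := S.exists_max_image (G.dist r) (hne.biUnion fun p _ => by simp)
  have hother : ∀ q ∈ E, ℓ = q.1 ∨ ℓ = q.2 →
      ∃ u, (q = (ℓ, u) ∨ q = (u, ℓ)) ∧ G.Adj ℓ u ∧ G.dist r u < G.dist r ℓ := by
    rintro ⟨a, b⟩ hq hℓq
    have hab := (hE _ hq).1
    obtain ⟨u, hqu, hadj⟩ : ∃ u, ((a, b) = (ℓ, u) ∨ (a, b) = (u, ℓ)) ∧ G.Adj ℓ u := by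
      rcases hℓq with rfl | rfl
      · exact ⟨b, Or.inl rfl, hab⟩
      · exact ⟨a, Or.inr rfl, hab.symm⟩
    have huS : u ∈ S := mem_biUnion.2 ⟨_, hq, by rcases hqu with h | h <;> simp_all⟩
    exact ⟨u, hqu, hadj,
      (hmax u huS).lt_of_ne (hG.dist_ne_of_adj r hadj).symm⟩
  obtain ⟨p, hp, hℓp⟩ := mem_biUnion.1 hℓS
  obtain ⟨w, hpw, hadj, hlt⟩ := hother p hp (by simpa [eq_comm] using hℓp)
  refine ⟨p, hp, ℓ, w, hpw, fun q hq => ?_⟩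
  by_contra hℓq
  obtain ⟨u, hqu, hadj', hlt'⟩ := hother q (mem_of_mem_erase hq) (by tauto)
  obtain rfl := hG.eq_of_adj_of_dist_lt r hadj hadj' hlt hlt'
  have hp12 := (hE p hp).2
  have hq12 := (hE q (mem_of_mem_erase hq)).2
  apply ne_of_mem_erase hq
  rcases hpw with rfl | rfl <;> rcases hqu with rfl | rfl
  all_goals first | rfl | exact absurd hp12 (lt_asymm hq12)

end SimpleGraph

section Tree

variable {V : Type*} [Fintype V] [LinearOrder V] {X : V → Type*} [∀ v, Fintype (X v)]
  [∀ v, DecidableEq (X v)]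

theorem eq_prod_marg1_of_factorsOver_empty {f : (∀ v, X v) → ℝ} (hf : FactorsOver ∅ f)
    (hnorm : ∑ x, f x = 1) (x : ∀ v, X v) : f x = ∏ v, marg1 f v (x v) := by
  obtain ⟨_, χ, -, hχ, hfx⟩ := hf
  refine eq_prod_marg1_of_eq_prod (c := fun v b => χ v (update x v b)) (fun z => ?_) hnorm x
  rw [hfx, prod_empty, one_mul]
  exact prod_congr rfl fun v _ => hχ v _ _ (by simp)

theorem FactorsOver.eq_prod_dependenceRatio {G : SimpleGraph V} (hG : G.IsTree)
    {E : Finset (V × V)} (hE : ∀ p ∈ E, G.Adj p.1 p.2 ∧ p.1 < p.2) {f : (∀ v, X v) → ℝ}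
    (hf : FactorsOver E f) (hpos : ∀ x, 0 < f x) (hnorm : ∑ x, f x = 1) (x : ∀ v, X v) :
    f x = (∏ p ∈ E, dependenceRatio f p.1 p.2 (x p.1) (x p.2)) * ∏ v, marg1 f v (x v) := by
  induction E using Finset.strongInduction generalizing f with
  | H E ih =>
  rcases E.eq_empty_or_nonempty with rfl | hne
  · rw [prod_empty, one_mul]
    exact eq_prod_marg1_of_factorsOver_empty hf hnorm x
  obtain ⟨p, hp, ℓ, w, hpℓw, hleaf⟩ := hG.exists_pendant_edge hE hne
  have hℓw : ℓ ≠ w := by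
    rcases hpℓw with rfl | rfl
    exacts [(hE _ hp).1.ne, (hE _ hp).1.ne.symm]
  have : Nonempty (X ℓ) := ⟨x ℓ⟩
  obtain ⟨φ, ψ, hφ, -, hψ, hfφψ⟩ := hf.exists_leaf_split hp hpℓw hleaf
  have hmarkov := mul_marg1_eq_marg2_mul_sum_update hℓw hφ hψ hfφψ x
  have havg := ih (E.erase p) (erase_ssubset hp) (fun q hq => hE q (mem_of_mem_erase hq))
    (hf.avgAt_of_leaf hp hpℓw hleaf) (avgAt_pos hpos) (by rw [sum_avgAt, hnorm])
  rw [prod_congr rfl fun q hq =>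
      dependenceRatio_avgAt_of_ne (hleaf q hq).1.symm (hleaf q hq).2.symm _ _,
    prod_marg1_avgAt hnorm, avgAt] at havg
  have hp_ratio : dependenceRatio f p.1 p.2 (x p.1) (x p.2) =
      dependenceRatio f ℓ w (x ℓ) (x w) := by
    rcases hpℓw with rfl | rfl
    exacts [rfl, dependenceRatio_comm f _ _ _ _]
  rw [← mul_prod_erase E _ hp, ← mul_prod_erase univ (fun v => marg1 f v (x v)) (mem_univ ℓ),
    hp_ratio, dependenceRatio]
  have := (marg1_pos hpos x ℓ (x ℓ)).ne'
  have := (marg1_pos hpos x w (x w)).ne'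
  field_simp at havg ⊢
  linear_combination hmarkov + marg2 f ℓ w (x ℓ) (x w) * havg

end Tree

/-- If a (discrete, positive) distribution factorizes with respect to a tree
`G` — the edges being listed once as the ordered pairs `(p.1, p.2)` with
`p.1 < p.2` — then its density satisfies
`f(x) = ∏_{{v,w} ∈ E} f_{vw}(x_v,x_w)/(f_v(x_v) f_w(x_w)) · ∏_v f_v(x_v)`. -/
theorem tree_factorization_in_marginals
    {V : Type*} [Fintype V] [LinearOrder V]
    {X : V → Type*} [∀ v, Fintype (X v)] [∀ v, DecidableEq (X v)]
    (G : SimpleGraph V) [DecidableRel G.Adj] (hG : G.IsTree)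
    (edges : Finset (V × V))
    (hedges : edges = Finset.univ.filter (fun p : V × V => G.Adj p.1 p.2 ∧ p.1 < p.2))
    (f : (∀ v, X v) → ℝ) (hpos : ∀ x, 0 < f x) (hnorm : ∑ x, f x = 1)
    (φ : V → V → (∀ v, X v) → ℝ)
    (hdep : ∀ p ∈ edges, DependsOnlyOn {p.1, p.2} (φ p.1 p.2))
    (hfac : ∀ x, f x = ∏ p ∈ edges, φ p.1 p.2 x) :
    ∀ x, f x =
      (∏ p ∈ edges,
          marg2 f p.1 p.2 (x p.1) (x p.2) /
            (marg1 f p.1 (x p.1) * marg1 f p.2 (x p.2))) *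
        ∏ v, marg1 f v (x v) := by
  have hE : ∀ p ∈ edges, G.Adj p.1 p.2 ∧ p.1 < p.2 := fun p hp => by
    simpa [hedges] using hp
  have hf : FactorsOver edges f :=
    ⟨φ, fun _ => 1, hdep, fun _ _ _ _ => rfl, fun x => by simp [hfac x]⟩
  exact hf.eq_prod_dependenceRatio hG hE hpos hnorm
end
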